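/- Define c̃(ζ) := −(2 λ″(|ζ|²)|ζ|² + 2 λ′(|ζ|²)) / λ′(|ζ|²) for ζ ∈ ℝ² with ζ ≠ 0. There exists a constant C > 0 such that for every sign ν ∈ {+1, −1} and all ξ, η ∈ ℝ² with 0 < |η| ≤ 2^{−10} |ξ|: |(L̂_ξ + L̂_η) Φ^{+1,ν}(ξ, η) − c̃(ξ−η) Φ^{+1,ν}(ξ, η)| ≤ C |η|², where L̂_ξ := −ξ·∇_ξ and L̂_η := −η·∇_η. -/

import Mathlib

/-!
Write `X = |ξ|²`, `Y = |η|²`, `Z = |ξ - η|²` and `g(u) = 2u λ'(u)`. The operator `L̂_ξ + L̂_η`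
is minus the generator of the joint dilation `(ξ, η) ↦ (tξ, tη)`, which acts on each term
`λ(|·|²)` of the phase as `2u ∂ᵤ`; so the quantity to bound is
`-(g X - g Z - ν g Y) + R (λ X - λ Z - ν λ Y)` with `R = -c̃(ξ - η) = g'(Z) / λ'(Z)`.
This `R` is exactly the factor that cancels the first-order Taylor terms at `Z`, and the
remaining second-order terms are `O(sup |g''| + sup |λ''|) (X - Z)² = O(X⁻¹) · O(XY)`, while
`g Y` and `λ Y` are `O(Y)`.

The symbol bounds `0 < λ' ≲ 1`, `|u λ''| ≲ λ'`, `|u g''| ≲ 1` come from the substitution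
`s = u^{1/4}`: then `λ = s³ τ(s)` with `τ(s) = √(tanh s²)`, which solves `τ' = s (1 - τ⁴) / τ`,
so every derivative is rational in `s` and `τ`, and each is controlled by
`xᵏ sech² x / tanhᵏ x ≤ 3` (`x = s²`, `k ≤ 3`).
-/

noncomputable section

abbrev E2 : Type := EuclideanSpace ℝ (Fin 2)

/-- Euclidean dot product on ℝ². -/
def dotE (x y : E2) : ℝ := ∑ i : Fin 2, x i * y i

/-- `Λ(r) = r^{3/2} (tanh r)^{1/2}`. -/
def Lam (r : ℝ) : ℝ := r ^ ((3 : ℝ) / 2) * Real.sqrt (Real.tanh r)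

/-- `λ(x) = Λ(√x)`. -/
def lam (x : ℝ) : ℝ := Lam (Real.sqrt x)

/-- The phase `Φ^{μ,ν}(ξ,η) = Λ(|ξ|) − μ Λ(|ξ−η|) − ν Λ(|η|)`. -/
def Phi (μ ν : ℝ) (ξ η : E2) : ℝ := Lam ‖ξ‖ - μ * Lam ‖ξ - η‖ - ν * Lam ‖η‖

/-- `c̃(ζ) = −(2λ″(|ζ|²)|ζ|² + 2λ′(|ζ|²)) / λ′(|ζ|²)`. -/
def ctilde (ζ : E2) : ℝ :=
  -(2 * deriv (deriv lam) (‖ζ‖ ^ 2) * ‖ζ‖ ^ 2 + 2 * deriv lam (‖ζ‖ ^ 2)) / deriv lam (‖ζ‖ ^ 2)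

open Real

open Set in
lemma abs_sub_sub_mul_le_of_hasDerivAt {f f₁ f₂ : ℝ → ℝ} {a b M : ℝ}
    (hf : ∀ u ∈ uIcc a b, HasDerivAt f (f₁ u) u) (hf₁ : ∀ u ∈ uIcc a b, HasDerivAt f₁ (f₂ u) u)
    (hM : ∀ u ∈ uIcc a b, |f₂ u| ≤ M) :
    |f b - f a - f₁ a * (b - a)| ≤ M * (b - a) ^ 2 := by
  have ha : a ∈ uIcc a b := left_mem_uIcc
  have hb : b ∈ uIcc a b := right_mem_uIcc
  have hf₁_lip : ∀ u ∈ uIcc a b, ‖f₁ u - f₁ a‖ ≤ M * |b - a| := fun u hu => by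
    refine ((convex_uIcc a b).norm_image_sub_le_of_norm_hasDerivWithin_le
      (fun v hv => (hf₁ v hv).hasDerivWithinAt) hM ha hu).trans ?_
    gcongr
    · exact (abs_nonneg _).trans (hM a ha)
    · exact abs_sub_left_of_mem_uIcc hu
  have hg : ∀ v ∈ uIcc a b,
      HasDerivWithinAt (fun t => f t - f₁ a * t) (f₁ v - f₁ a) (uIcc a b) v := fun v hv => by
    simpa using ((hf v hv).fun_sub ((hasDerivAt_id' v).const_mul (f₁ a))).hasDerivWithinAt
  have := (convex_uIcc a b).norm_image_sub_le_of_norm_hasDerivWithin_le hg hf₁_lip ha hb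
  rw [Real.norm_eq_abs, Real.norm_eq_abs] at this
  calc |f b - f a - f₁ a * (b - a)| = |f b - f₁ a * b - (f a - f₁ a * a)| := by ring_nf
    _ ≤ M * |b - a| * |b - a| := this
    _ = M * (b - a) ^ 2 := by rw [mul_assoc, ← sq, sq_abs]

open Set in
lemma abs_sub_sub_mul_mul_le {F F₁ F₂ : ℝ → ℝ} {K X Z : ℝ}
    (hF : ∀ u, 0 < u → HasDerivAt F (F₁ u) u) (hF₁ : ∀ u, 0 < u → HasDerivAt F₁ (F₂ u) u)
    (hK : ∀ u, 0 < u → |u * F₂ u| ≤ K) (hX : 0 < X) (hXZ : X ≤ 2 * Z) :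
    |F X - F Z - F₁ Z * (X - Z)| * X ≤ 2 * K * (X - Z) ^ 2 := by
  have hpos : ∀ u ∈ uIcc Z X, X ≤ 2 * u := fun u hu => by
    rcases mem_uIcc.1 hu with h | h <;> linarith [h.1, h.2]
  have hF₂ : ∀ u ∈ uIcc Z X, |F₂ u| ≤ 2 * K / X := fun u hu => by
    have hu := hpos u hu
    have hu0 : 0 < u := by linarith
    rw [le_div_iff₀ hX]
    have := hK u hu0
    rw [abs_mul, abs_of_pos hu0] at this
    nlinarith [abs_nonneg (F₂ u)]
  have := abs_sub_sub_mul_le_of_hasDerivAt (fun u hu => hF u (by linarith [hpos u hu]))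
    (fun u hu => hF₁ u (by linarith [hpos u hu])) hF₂
  rw [div_mul_eq_mul_div, le_div_iff₀ hX] at this
  linarith

lemma HasDerivAt.two_mul_self_mul {φ : ℝ → ℝ} {φ' u : ℝ} (h : HasDerivAt φ φ' u) :
    HasDerivAt (fun v => 2 * v * φ v) (2 * φ u + 2 * u * φ') u := by
  simpa [two_mul, add_mul] using ((hasDerivAt_id' u).const_mul 2).fun_mul h

lemma abs_two_mul_add_div_le {a b M Z : ℝ} (ha : 0 < a) (hb : |Z * b| ≤ M * a) :
    |(2 * a + 2 * Z * b) / a| ≤ 2 + 2 * M := by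
  rw [abs_div, abs_of_pos ha, div_le_iff₀ ha]
  calc |2 * a + 2 * Z * b| ≤ |2 * a| + |2 * (Z * b)| := by
        simpa only [mul_assoc] using abs_add_le _ _
    _ ≤ (2 + 2 * M) * a := by rw [abs_mul, abs_mul, abs_two, abs_of_pos ha]; linarith

theorem abs_euler_phase_sub_le {f f₁ f₂ f₃ : ℝ → ℝ} {M ν X Y Z : ℝ}
    (hf : ∀ u, 0 < u → HasDerivAt f (f₁ u) u) (hf₁ : ∀ u, 0 < u → HasDerivAt f₁ (f₂ u) u)
    (hf₂ : ∀ u, 0 < u → HasDerivAt f₂ (f₃ u) u)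
    (hf_le : ∀ u, 0 < u → |f u| ≤ M * u) (hf₁_pos : ∀ u, 0 < u → 0 < f₁ u)
    (hf₁_le : ∀ u, 0 < u → f₁ u ≤ M) (hf₂_le : ∀ u, 0 < u → |u * f₂ u| ≤ M * f₁ u)
    (hf₃_le : ∀ u, 0 < u → |u * (4 * f₂ u + 2 * u * f₃ u)| ≤ M)
    (hν : |ν| = 1) (hY : 0 < Y) (hYX : Y ≤ X) (hXZ : X ≤ 2 * Z) (hXZY : (X - Z) ^ 2 ≤ 9 * X * Y) :
    |-(2 * X * f₁ X - 2 * Z * f₁ Z - ν * (2 * Y * f₁ Y))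
        - -(2 * f₂ Z * Z + 2 * f₁ Z) / f₁ Z * (f X - f Z - ν * f Y)|
      ≤ 40 * M * (1 + M) ^ 2 * Y := by
  have hX : 0 < X := hY.trans_le hYX
  have hZ : 0 < Z := by linarith
  have hM : 0 ≤ M := (hf₁_pos Y hY).le.trans (hf₁_le Y hY)
  set g₁ : ℝ → ℝ := fun u => 2 * f₁ u + 2 * u * f₂ u
  have hg₁ : ∀ u, 0 < u → HasDerivAt g₁ (4 * f₂ u + 2 * u * f₃ u) u := fun u hu =>
    (((hf₁ u hu).const_mul 2).fun_add (hf₂ u hu).two_mul_self_mul).congr_deriv (by ring)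
  have hRg := abs_sub_sub_mul_mul_le (fun u hu => (hf₁ u hu).two_mul_self_mul) hg₁ hf₃_le hX hXZ
  have hRf := abs_sub_sub_mul_mul_le hf hf₁ (fun u hu => (hf₂_le u hu).trans
    (mul_le_mul_of_nonneg_left (hf₁_le u hu) hM)) hX hXZ
  have hXZY' : (X - Z) ^ 2 * 1 ≤ 9 * Y * X := by linarith
  have hEg : |2 * X * f₁ X - 2 * Z * f₁ Z - g₁ Z * (X - Z)| ≤ 18 * M * Y :=
    le_of_mul_le_mul_right (by nlinarith) hX
  have hEf : |f X - f Z - f₁ Z * (X - Z)| ≤ 18 * M ^ 2 * Y :=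
    le_of_mul_le_mul_right (by nlinarith) hX
  set R := g₁ Z / f₁ Z
  have hR : |R| ≤ 2 + 2 * M := abs_two_mul_add_div_le (hf₁_pos Z hZ) (hf₂_le Z hZ)
  have hgY : |2 * Y * f₁ Y| ≤ 2 * M * Y := by
    rw [abs_of_pos (by have := hf₁_pos Y hY; positivity)]
    nlinarith [hf₁_le Y hY]
  have hRfY : |R * f Y| ≤ (2 + 2 * M) * (M * Y) := by
    rw [abs_mul]; exact mul_le_mul hR (hf_le Y hY) (abs_nonneg _) (by positivity)
  have hc : -(2 * f₂ Z * Z + 2 * f₁ Z) / f₁ Z = -R := by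
    rw [neg_div]; simp only [R, g₁]; ring
  rw [hc]
  -- `R f₁ Z = g₁ Z` cancels the first-order Taylor terms at `Z`
  calc _ = |-(2 * X * f₁ X - 2 * Z * f₁ Z - g₁ Z * (X - Z)) + R * (f X - f Z - f₁ Z * (X - Z))
        + ν * (2 * Y * f₁ Y - R * f Y)| := by
          congr 1; linear_combination (X - Z) * div_mul_cancel₀ (g₁ Z) (hf₁_pos Z hZ).ne'
    _ ≤ |2 * X * f₁ X - 2 * Z * f₁ Z - g₁ Z * (X - Z)| + |R| * |f X - f Z - f₁ Z * (X - Z)|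
        + (|2 * Y * f₁ Y| + |R * f Y|) := by
      refine (abs_add_le _ _).trans (add_le_add ((abs_add_le _ _).trans_eq ?_) ?_)
      · rw [abs_neg, abs_mul]
      · rw [abs_mul, hν, one_mul]; exact abs_sub _ _
    _ ≤ 18 * M * Y + (2 + 2 * M) * (18 * M ^ 2 * Y) + (2 * M * Y + (2 + 2 * M) * (M * Y)) := by
      gcongr
    _ ≤ 40 * M * (1 + M) ^ 2 * Y := by
      nlinarith [mul_nonneg (mul_nonneg hM hM) hY.le, mul_nonneg (pow_nonneg hM 3) hY.le]

section SeminormedAddCommGroup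

variable {E : Type*} [SeminormedAddCommGroup E] {ξ η : E}

lemma sq_norm_le_two_mul_sq_norm_sub (h : ‖η‖ ≤ ‖ξ‖ / 4) : ‖ξ‖ ^ 2 ≤ 2 * ‖ξ - η‖ ^ 2 := by
  have := norm_sub_norm_le ξ η
  nlinarith [norm_nonneg η]

lemma sq_sq_norm_sub_sq_norm_sub_le (h : ‖η‖ ≤ ‖ξ‖) :
    (‖ξ‖ ^ 2 - ‖ξ - η‖ ^ 2) ^ 2 ≤ 9 * ‖ξ‖ ^ 2 * ‖η‖ ^ 2 := by
  have h₁ := abs_norm_sub_norm_le ξ (ξ - η)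
  rw [sub_sub_cancel] at h₁
  have h₂ : |‖ξ‖ + ‖ξ - η‖| ≤ 3 * ‖ξ‖ := by
    rw [abs_of_nonneg (by positivity)]
    linarith [norm_sub_le ξ η]
  rw [← sq_abs, sq_sub_sq, abs_mul]
  calc (|‖ξ‖ + ‖ξ - η‖| * |‖ξ‖ - ‖ξ - η‖|) ^ 2 ≤ (3 * ‖ξ‖ * ‖η‖) ^ 2 := by gcongr
    _ = 9 * ‖ξ‖ ^ 2 * ‖η‖ ^ 2 := by ring

end SeminormedAddCommGroup

lemma HasDerivAt.hasFDerivAt_norm_sub_sq {E : Type*} [NormedAddCommGroup E]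
    [InnerProductSpace ℝ E] {f : ℝ → ℝ} {f' : ℝ} {a w : E} (hf : HasDerivAt f f' (‖w - a‖ ^ 2)) :
    HasFDerivAt (fun ζ => f (‖ζ - a‖ ^ 2)) ((2 * f') • innerSL ℝ (w - a)) w := by
  refine (hf.comp_hasFDerivAt w (hasFDerivAt_sub_const a).norm_sq).congr_fderiv ?_
  ext v
  simp
  ring

namespace Real

lemma tanh_pos_of_pos {x : ℝ} (hx : 0 < x) : 0 < tanh x := by
  rw [tanh_eq_sinh_div_cosh]
  exact div_pos (sinh_pos_iff.2 hx) (cosh_pos x)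

lemma tanh_nonneg_of_nonneg {x : ℝ} (hx : 0 ≤ x) : 0 ≤ tanh x := by
  rw [tanh_eq_sinh_div_cosh]
  exact div_nonneg (sinh_nonneg_iff.2 hx) (cosh_pos x).le

lemma sinh_le_mul_cosh {x : ℝ} (hx : 0 ≤ x) : sinh x ≤ x * cosh x := by
  rcases hx.eq_or_lt with rfl | hx
  · simp
  obtain ⟨c, hc, hslope⟩ := exists_hasDerivAt_eq_slope sinh cosh hx
    continuous_sinh.continuousOn fun y _ => hasDerivAt_sinh y
  rw [sinh_zero, sub_zero, sub_zero, eq_div_iff hx.ne'] at hslope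
  have : cosh c ≤ cosh x := cosh_le_cosh.2 (by rw [abs_of_pos hc.1, abs_of_pos hx]; exact hc.2.le)
  nlinarith

lemma tanh_le_self {x : ℝ} (hx : 0 ≤ x) : tanh x ≤ x := by
  rw [tanh_eq_sinh_div_cosh, div_le_iff₀ (cosh_pos x)]
  exact sinh_le_mul_cosh hx

lemma hasDerivAt_tanh (x : ℝ) : HasDerivAt tanh (1 - tanh x ^ 2) x := by
  have h : HasDerivAt (fun y => sinh y / cosh y) _ x :=
    (hasDerivAt_sinh x).div (hasDerivAt_cosh x) (cosh_pos x).ne'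
  rw [show tanh = fun y => sinh y / cosh y from funext tanh_eq_sinh_div_cosh]
  convert h using 1
  field_simp

lemma sq_le_two_mul_sinh {x : ℝ} (hx : 0 ≤ x) : x ^ 2 ≤ 2 * sinh x := by
  have hhalf : cosh x = 1 + 2 * sinh (x / 2) ^ 2 := by
    conv_lhs => rw [show x = 2 * (x / 2) by ring, cosh_two_mul, cosh_sq']
    ring
  have : x / 2 ≤ sinh (x / 2) := self_le_sinh_iff.2 (by linarith)
  have := cosh_sub_sinh x
  nlinarith [exp_le_one_iff.2 (neg_nonpos.2 hx)]

/-- `x ≤ sinh x`, `x² ≤ 2 sinh x` and `cosh x ≤ 1 + sinh x` give `x³ cosh x ≤ 3 sinh³ x`. -/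
lemma pow_three_mul_one_sub_tanh_sq_le {x : ℝ} (hx : 0 ≤ x) :
    x ^ 3 * (1 - tanh x ^ 2) ≤ 3 * tanh x ^ 3 := by
  have hsinh : x ≤ sinh x := self_le_sinh_iff.2 hx
  have hsq := sq_le_two_mul_sinh hx
  have hcosh_sinh : cosh x ≤ 1 + sinh x := by
    linarith [cosh_sub_sinh x, exp_le_one_iff.2 (neg_nonpos.2 hx)]
  have hkey : x ^ 3 * cosh x ≤ 3 * sinh x ^ 3 := by
    have h3 : x ^ 3 ≤ sinh x ^ 3 := pow_le_pow_left₀ hx hsinh 3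
    have hx3 : 0 ≤ x ^ 3 := by positivity
    nlinarith [mul_le_mul_of_nonneg_left hcosh_sinh hx3,
      mul_le_mul hsinh hsq (by positivity) (hx.trans hsinh)]
  have hc := cosh_pos x
  rw [tanh_eq_sinh_div_cosh, div_pow, div_pow, ← sub_nonneg]
  have : 3 * (sinh x ^ 3 / cosh x ^ 3) - x ^ 3 * (1 - sinh x ^ 2 / cosh x ^ 2)
      = (3 * sinh x ^ 3 - x ^ 3 * cosh x) / cosh x ^ 3 := by
    field_simp
    rw [cosh_sq]
    ring
  rw [this]
  exact div_nonneg (by linarith) (by positivity)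

end Real

def sqrtTanhSq (s : ℝ) : ℝ := √(tanh (s ^ 2))

local notation "τ" => sqrtTanhSq

lemma sqrtTanhSq_sq (s : ℝ) : τ s ^ 2 = tanh (s ^ 2) :=
  sq_sqrt (tanh_nonneg_of_nonneg (sq_nonneg s))

lemma sqrtTanhSq_pos {s : ℝ} (hs : 0 < s) : 0 < τ s :=
  sqrt_pos.2 (tanh_pos_of_pos (by positivity))

lemma sqrtTanhSq_le {s : ℝ} (hs : 0 ≤ s) : τ s ≤ s :=
  (sqrt_le_sqrt (tanh_le_self (sq_nonneg s))).trans_eq (sqrt_sq hs)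

lemma sqrtTanhSq_pow_four_lt_one (s : ℝ) : τ s ^ 4 < 1 := by
  rw [show τ s ^ 4 = (τ s ^ 2) ^ 2 by ring, sqrtTanhSq_sq]
  exact tanh_sq_lt_one _

lemma hasDerivAt_sqrtTanhSq {s : ℝ} (hs : 0 < s) :
    HasDerivAt τ (s * (1 - τ s ^ 4) / τ s) s := by
  have h : HasDerivAt (fun y => tanh (y ^ 2)) _ s :=
    (hasDerivAt_tanh (s ^ 2)).comp (h₂ := tanh) s (hasDerivAt_pow 2 s)
  refine (h.sqrt (tanh_pos_of_pos (by positivity)).ne').congr_deriv ?_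
  have ht := sqrtTanhSq_pos hs
  rw [← sqrtTanhSq_sq, sqrt_sq ht.le]
  field_simp
  ring

lemma pow_mul_one_sub_sqrtTanhSq_pow_four_le {s : ℝ} (hs : 0 < s) {k : ℕ} (hk : k ≤ 3) :
    s ^ (2 * k) * (1 - τ s ^ 4) ≤ 3 * τ s ^ (2 * k) := by
  have ht := sqrtTanhSq_pos hs
  have hσ : 0 ≤ 1 - τ s ^ 4 := by linarith [sqrtTanhSq_pow_four_lt_one s]
  have h6 : s ^ 6 * (1 - τ s ^ 4) ≤ 3 * τ s ^ 6 := by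
    have h := pow_three_mul_one_sub_tanh_sq_le (sq_nonneg s)
    rw [← sqrtTanhSq_sq] at h
    convert h using 2 <;> ring
  refine le_of_mul_le_mul_right ?_ (pow_pos ht (6 - 2 * k))
  calc s ^ (2 * k) * (1 - τ s ^ 4) * τ s ^ (6 - 2 * k)
      ≤ s ^ (2 * k) * (1 - τ s ^ 4) * s ^ (6 - 2 * k) := by
        gcongr; exact sqrtTanhSq_le hs.le
    _ = s ^ 6 * (1 - τ s ^ 4) := by
        rw [mul_right_comm, ← pow_add, show 2 * k + (6 - 2 * k) = 6 by omega]
    _ ≤ 3 * τ s ^ 6 := h6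
    _ = 3 * τ s ^ (2 * k) * τ s ^ (6 - 2 * k) := by
        rw [mul_assoc, ← pow_add, show 2 * k + (6 - 2 * k) = 6 by omega]

def lamQ₁ (s : ℝ) : ℝ := (3 * τ s ^ 2 + s ^ 2 * (1 - τ s ^ 4)) / (4 * s * τ s)

def lamQ₂ (s : ℝ) : ℝ :=
  (-3 * τ s ^ 4 + 4 * s ^ 2 * τ s ^ 2 * (1 - τ s ^ 4) - s ^ 4 * (1 - τ s ^ 4) * (1 + 3 * τ s ^ 4))
    / (16 * s ^ 5 * τ s ^ 3)

def lamQ₃ (s : ℝ) : ℝ :=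
  (15 * τ s ^ 6 - 15 * s ^ 2 * τ s ^ 4 * (1 - τ s ^ 4)
      - 3 * s ^ 4 * τ s ^ 2 * (1 - τ s ^ 4) * (1 + 3 * τ s ^ 4)
      + s ^ 6 * (1 - τ s ^ 4) * (3 - 2 * τ s ^ 4 + 15 * τ s ^ 8))
    / (64 * s ^ 9 * τ s ^ 5)

lemma hasDerivAt_pow_three_mul_sqrtTanhSq {s : ℝ} (hs : 0 < s) :
    HasDerivAt (fun y => y ^ 3 * τ y) (4 * s ^ 3 * lamQ₁ s) s := by
  refine ((hasDerivAt_pow 3 s).fun_mul (hasDerivAt_sqrtTanhSq hs)).congr_deriv ?_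
  have := sqrtTanhSq_pos hs
  unfold lamQ₁
  field_simp
  ring

lemma hasDerivAt_lamQ₁ {s : ℝ} (hs : 0 < s) : HasDerivAt lamQ₁ (4 * s ^ 3 * lamQ₂ s) s := by
  have hτ := hasDerivAt_sqrtTanhSq hs
  have ht := sqrtTanhSq_pos hs
  have h := (((hτ.fun_pow 2).const_mul 3).fun_add ((hasDerivAt_pow 2 s).fun_mul
    ((hasDerivAt_const s 1).fun_sub (hτ.fun_pow 4)))).fun_div
    (((hasDerivAt_id' s).const_mul 4).fun_mul hτ) (by positivity)
  refine h.congr_deriv ?_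
  unfold lamQ₂
  field_simp
  ring

lemma hasDerivAt_lamQ₂ {s : ℝ} (hs : 0 < s) : HasDerivAt lamQ₂ (4 * s ^ 3 * lamQ₃ s) s := by
  have hτ := hasDerivAt_sqrtTanhSq hs
  have ht := sqrtTanhSq_pos hs
  have hσ := (hasDerivAt_const s 1).fun_sub (hτ.fun_pow 4)
  have h := ((((hτ.fun_pow 4).const_mul (-3)).fun_add
      ((((hasDerivAt_pow 2 s).const_mul 4).fun_mul (hτ.fun_pow 2)).fun_mul hσ)).fun_sub
      (((hasDerivAt_pow 4 s).fun_mul hσ).fun_mul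
        ((hasDerivAt_const s 1).fun_add ((hτ.fun_pow 4).const_mul 3)))).fun_div
    (((hasDerivAt_pow 5 s).const_mul 16).fun_mul (hτ.fun_pow 3)) (by positivity)
  refine h.congr_deriv ?_
  unfold lamQ₃
  field_simp
  ring

/-- In the variable `x = s²` this is `xᵏ sech² x / tanhᵏ x`. -/
def scaledSech (k : ℕ) (s : ℝ) : ℝ := s ^ (2 * k) * (1 - τ s ^ 4) / τ s ^ (2 * k)

lemma scaledSech_nonneg {s : ℝ} (hs : 0 < s) (k : ℕ) : 0 ≤ scaledSech k s := by
  have := sqrtTanhSq_pos hs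
  have : 0 ≤ 1 - τ s ^ 4 := by linarith [sqrtTanhSq_pow_four_lt_one s]
  unfold scaledSech
  positivity

lemma scaledSech_le_three {s : ℝ} (hs : 0 < s) {k : ℕ} (hk : k ≤ 3) : scaledSech k s ≤ 3 :=
  (div_le_iff₀ (pow_pos (sqrtTanhSq_pos hs) _)).2 (pow_mul_one_sub_sqrtTanhSq_pow_four_le hs hk)

lemma lamQ₁_eq {s : ℝ} (hs : 0 < s) : lamQ₁ s = τ s / s * (3 + scaledSech 1 s) / 4 := by
  have := sqrtTanhSq_pos hs
  unfold lamQ₁ scaledSech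
  field_simp
  ring

lemma pow_four_mul_lamQ₂_eq {s : ℝ} (hs : 0 < s) :
    s ^ 4 * lamQ₂ s =
      τ s / s * (-3 + 4 * scaledSech 1 s - scaledSech 2 s * (1 + 3 * τ s ^ 4)) / 16 := by
  have := sqrtTanhSq_pos hs
  unfold lamQ₂ scaledSech
  field_simp
  ring

lemma pow_four_mul_lamQ₂₃_eq {s : ℝ} (hs : 0 < s) :
    s ^ 4 * (4 * lamQ₂ s + 2 * s ^ 4 * lamQ₃ s) =
      τ s / s * (-9 + 17 * scaledSech 1 s - 11 * scaledSech 2 s * (1 + 3 * τ s ^ 4)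
        + scaledSech 3 s * (3 - 2 * τ s ^ 4 + 15 * τ s ^ 8)) / 32 := by
  have := sqrtTanhSq_pos hs
  unfold lamQ₂ lamQ₃ scaledSech
  field_simp
  ring

lemma lamQ₁_pos {s : ℝ} (hs : 0 < s) : 0 < lamQ₁ s := by
  rw [lamQ₁_eq hs]
  have := sqrtTanhSq_pos hs
  have := scaledSech_nonneg hs 1
  positivity

lemma sqrtTanhSq_div_le_one {s : ℝ} (hs : 0 < s) : τ s / s ≤ 1 :=
  div_le_one_of_le₀ (sqrtTanhSq_le hs.le) hs.le

lemma lamQ₁_le {s : ℝ} (hs : 0 < s) : lamQ₁ s ≤ 3 / 2 := by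
  rw [lamQ₁_eq hs]
  have := scaledSech_le_three hs (k := 1) (by norm_num)
  have := (sqrtTanhSq_pos hs).le
  have := sqrtTanhSq_div_le_one hs
  have : 0 ≤ τ s / s := by positivity
  nlinarith

lemma abs_pow_four_mul_lamQ₂_le {s : ℝ} (hs : 0 < s) : |s ^ 4 * lamQ₂ s| ≤ 9 / 4 * lamQ₁ s := by
  have hp : 0 < τ s / s := div_pos (sqrtTanhSq_pos hs) hs
  have h1 := scaledSech_le_three hs (k := 1) (by norm_num)
  have h2 := scaledSech_le_three hs (k := 2) (by norm_num)
  have h1' := scaledSech_nonneg hs 1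
  have h2' := scaledSech_nonneg hs 2
  have ht := sqrtTanhSq_pow_four_lt_one s
  have ht' : 0 ≤ τ s ^ 4 := by positivity
  rw [pow_four_mul_lamQ₂_eq hs, lamQ₁_eq hs, abs_div, abs_mul, abs_of_pos hp,
    abs_of_pos (by norm_num : (0 : ℝ) < 16)]
  have : |-3 + 4 * scaledSech 1 s - scaledSech 2 s * (1 + 3 * τ s ^ 4)| ≤ 27 := by
    rw [abs_le]; constructor <;> nlinarith
  nlinarith

lemma abs_pow_four_mul_lamQ₂₃_le {s : ℝ} (hs : 0 < s) :
    |s ^ 4 * (4 * lamQ₂ s + 2 * s ^ 4 * lamQ₃ s)| ≤ 8 := by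
  have hp : 0 < τ s / s := div_pos (sqrtTanhSq_pos hs) hs
  have hp' := sqrtTanhSq_div_le_one hs
  have h1 := scaledSech_le_three hs (k := 1) (by norm_num)
  have h2 := scaledSech_le_three hs (k := 2) (by norm_num)
  have h3 := scaledSech_le_three hs (k := 3) (by norm_num)
  have h1' := scaledSech_nonneg hs 1
  have h2' := scaledSech_nonneg hs 2
  have h3' := scaledSech_nonneg hs 3
  have ht := sqrtTanhSq_pow_four_lt_one s
  have ht' : 0 ≤ τ s ^ 4 := by positivity
  have ht8 : τ s ^ 8 ≤ 1 := by nlinarith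
  rw [pow_four_mul_lamQ₂₃_eq hs, abs_div, abs_mul, abs_of_pos hp,
    abs_of_pos (by norm_num : (0 : ℝ) < 32)]
  have : |-9 + 17 * scaledSech 1 s - 11 * scaledSech 2 s * (1 + 3 * τ s ^ 4)
      + scaledSech 3 s * (3 - 2 * τ s ^ 4 + 15 * τ s ^ 8)| ≤ 256 := by
    rw [abs_le]; constructor <;> nlinarith
  nlinarith

def quartRoot (u : ℝ) : ℝ := √(√u)

lemma quartRoot_pos {u : ℝ} (hu : 0 < u) : 0 < quartRoot u :=
  sqrt_pos.2 (sqrt_pos.2 hu)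

lemma quartRoot_pow_four {u : ℝ} (hu : 0 ≤ u) : quartRoot u ^ 4 = u := by
  rw [quartRoot, show 4 = 2 * 2 from rfl, pow_mul, sq_sqrt (sqrt_nonneg u), sq_sqrt hu]

lemma HasDerivAt.comp_quartRoot {F G : ℝ → ℝ} {u : ℝ} (hu : 0 < u)
    (hF : HasDerivAt F (4 * quartRoot u ^ 3 * G (quartRoot u)) (quartRoot u)) :
    HasDerivAt (fun v => F (quartRoot v)) (G (quartRoot u)) u := by
  have hq : HasDerivAt quartRoot (1 / (2 * √u) / (2 * quartRoot u)) u :=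
    (hasDerivAt_sqrt hu.ne').sqrt (sqrt_pos.2 hu).ne'
  refine (hF.comp u hq).congr_deriv ?_
  have hs := quartRoot_pos hu
  rw [← sq_sqrt (sqrt_nonneg u), ← quartRoot]
  field_simp
  ring

/-- `lamₖ u` is the `k`-th derivative of `lam` at `u > 0`, written in the variable
`s = u^{1/4}` (so `lamQₖ s` is the `k`-th derivative of `lam` at `s⁴`). -/
def lam₁ (u : ℝ) : ℝ := lamQ₁ (quartRoot u)

def lam₂ (u : ℝ) : ℝ := lamQ₂ (quartRoot u)

def lam₃ (u : ℝ) : ℝ := lamQ₃ (quartRoot u)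

lemma lam_eq {u : ℝ} (hu : 0 < u) : lam u = quartRoot u ^ 3 * τ (quartRoot u) := by
  have hs := quartRoot_pos hu
  have hsq : √u = quartRoot u ^ 2 := (sq_sqrt (sqrt_nonneg u)).symm
  rw [lam, Lam, hsq, ← rpow_natCast (quartRoot u) 2, ← rpow_mul hs.le,
    show ((2 : ℕ) : ℝ) * (3 / 2) = (3 : ℕ) by norm_num, rpow_natCast, rpow_natCast]
  rfl

lemma hasDerivAt_lam {u : ℝ} (hu : 0 < u) : HasDerivAt lam (lam₁ u) u := by
  refine ((hasDerivAt_pow_three_mul_sqrtTanhSq (quartRoot_pos hu)).comp_quartRoot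
    hu).congr_of_eventuallyEq ?_
  filter_upwards [lt_mem_nhds hu] with v hv using lam_eq hv

lemma hasDerivAt_lam₁ {u : ℝ} (hu : 0 < u) : HasDerivAt lam₁ (lam₂ u) u :=
  (hasDerivAt_lamQ₁ (quartRoot_pos hu)).comp_quartRoot hu

lemma hasDerivAt_lam₂ {u : ℝ} (hu : 0 < u) : HasDerivAt lam₂ (lam₃ u) u :=
  (hasDerivAt_lamQ₂ (quartRoot_pos hu)).comp_quartRoot hu

lemma deriv_lam {u : ℝ} (hu : 0 < u) : deriv lam u = lam₁ u :=
  (hasDerivAt_lam hu).deriv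

lemma deriv_deriv_lam {u : ℝ} (hu : 0 < u) : deriv (deriv lam) u = lam₂ u := by
  have : deriv lam =ᶠ[nhds u] lam₁ := by
    filter_upwards [lt_mem_nhds hu] with v hv using deriv_lam hv
  rw [this.deriv_eq, (hasDerivAt_lam₁ hu).deriv]

lemma lam₁_pos {u : ℝ} (hu : 0 < u) : 0 < lam₁ u := lamQ₁_pos (quartRoot_pos hu)

lemma lam₁_le {u : ℝ} (hu : 0 < u) : lam₁ u ≤ 3 / 2 := lamQ₁_le (quartRoot_pos hu)

lemma abs_mul_lam₂_le {u : ℝ} (hu : 0 < u) : |u * lam₂ u| ≤ 9 / 4 * lam₁ u := by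
  have h := abs_pow_four_mul_lamQ₂_le (quartRoot_pos hu)
  rwa [quartRoot_pow_four hu.le] at h

lemma abs_mul_lam₂₃_le {u : ℝ} (hu : 0 < u) : |u * (4 * lam₂ u + 2 * u * lam₃ u)| ≤ 8 := by
  have h := abs_pow_four_mul_lamQ₂₃_le (quartRoot_pos hu)
  rwa [quartRoot_pow_four hu.le] at h

lemma abs_lam_le {u : ℝ} (hu : 0 < u) : |lam u| ≤ u := by
  have hs := quartRoot_pos hu
  rw [lam_eq hu, abs_of_nonneg (by have := sqrtTanhSq_pos hs; positivity)]
  calc quartRoot u ^ 3 * τ (quartRoot u) ≤ quartRoot u ^ 3 * quartRoot u := by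
        gcongr; exact sqrtTanhSq_le hs.le
    _ = u := by rw [← pow_succ, quartRoot_pow_four hu.le]

lemma lam_sq {r : ℝ} (hr : 0 ≤ r) : lam (r ^ 2) = Lam r := by
  rw [lam, sqrt_sq hr]

lemma hasFDerivAt_Lam_norm_sub {E : Type*} [NormedAddCommGroup E] [InnerProductSpace ℝ E]
    {a w : E} (h : w ≠ a) :
    HasFDerivAt (fun ζ => Lam ‖ζ - a‖) ((2 * lam₁ (‖w - a‖ ^ 2)) • innerSL ℝ (w - a)) w := by
  simpa only [lam_sq (norm_nonneg _)] using
    (hasDerivAt_lam (pow_pos (norm_pos_iff.2 (sub_ne_zero.2 h)) 2)).hasFDerivAt_norm_sub_sq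

open scoped RealInnerProductSpace

lemma dotE_gradient (F : E2 → ℝ) (w v : E2) : dotE v (gradient F w) = fderiv ℝ F w v :=
  calc dotE v (gradient F w) = ⟪gradient F w, v⟫ := by
        simp only [dotE, PiLp.inner_apply, RCLike.inner_apply, conj_trivial]
    _ = fderiv ℝ F w v := InnerProductSpace.toDual_symm_apply

theorem euler_Phi (μ ν : ℝ) {ξ η : E2} (hξ : ξ ≠ 0) (hη : η ≠ 0) (hξη : ξ ≠ η) :
    -dotE ξ (gradient (fun ζ => Phi μ ν ζ η) ξ) - dotE η (gradient (fun ζ => Phi μ ν ξ ζ) η)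
      = -(2 * ‖ξ‖ ^ 2 * lam₁ (‖ξ‖ ^ 2) - μ * (2 * ‖ξ - η‖ ^ 2 * lam₁ (‖ξ - η‖ ^ 2))
          - ν * (2 * ‖η‖ ^ 2 * lam₁ (‖η‖ ^ 2))) := by
  have hleft : HasFDerivAt (fun ζ => Phi μ ν ζ η) ((2 * lam₁ (‖ξ‖ ^ 2)) • innerSL ℝ ξ
      - μ • (2 * lam₁ (‖ξ - η‖ ^ 2)) • innerSL ℝ (ξ - η)) ξ := by
    have h := ((hasFDerivAt_Lam_norm_sub (a := 0) hξ).sub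
      ((hasFDerivAt_Lam_norm_sub hξη).const_mul μ)).sub_const (ν * Lam ‖η‖)
    simp only [sub_zero] at h
    exact h
  have hright : HasFDerivAt (fun ζ => Phi μ ν ξ ζ)
      (-(μ • (2 * lam₁ (‖ξ - η‖ ^ 2)) • innerSL ℝ (η - ξ))
        - ν • (2 * lam₁ (‖η‖ ^ 2)) • innerSL ℝ η) η := by
    have h := (((hasFDerivAt_Lam_norm_sub hξη.symm).const_mul μ).const_sub (Lam ‖ξ‖)).sub
      ((hasFDerivAt_Lam_norm_sub (a := 0) hη).const_mul ν)
    simp only [sub_zero, norm_sub_rev η ξ] at h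
    rw [show (fun ζ => Phi μ ν ξ ζ) = fun ζ => Lam ‖ξ‖ - μ * Lam ‖ζ - ξ‖ - ν * Lam ‖ζ‖ from
      funext fun ζ => by rw [Phi, norm_sub_rev]]
    exact h
  rw [dotE_gradient, dotE_gradient, hleft.fderiv, hright.fderiv]
  simp only [sub_apply, neg_apply, smul_apply, innerSL_apply_apply, smul_eq_mul, inner_sub_left,
    real_inner_self_eq_norm_sq]
  linear_combination (-2 * μ * lam₁ (‖ξ - η‖ ^ 2)) * (norm_sub_sq_real ξ η)
    - (2 * μ * lam₁ (‖ξ - η‖ ^ 2)) * real_inner_comm ξ η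

lemma Phi_eq (μ ν : ℝ) (ξ η : E2) :
    Phi μ ν ξ η = lam (‖ξ‖ ^ 2) - μ * lam (‖ξ - η‖ ^ 2) - ν * lam (‖η‖ ^ 2) := by
  simp only [Phi, lam_sq (norm_nonneg _)]

theorem stmt14 :
    ∃ C : ℝ, 0 < C ∧
      ∀ ν : ℝ, (ν = 1 ∨ ν = -1) →
        ∀ ξ η : E2, 0 < ‖η‖ → ‖η‖ ≤ (2 : ℝ) ^ (-10 : ℤ) * ‖ξ‖ →
          |(-(dotE ξ (gradient (fun ζ : E2 => Phi 1 ν ζ η) ξ)) -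
              dotE η (gradient (fun ζ : E2 => Phi 1 ν ξ ζ) η)) -
              ctilde (ξ - η) * Phi 1 ν ξ η| ≤ C * ‖η‖ ^ 2 := by
  refine ⟨40 * 8 * (1 + 8) ^ 2, by norm_num, fun ν hν ξ η hη hηξ => ?_⟩
  have hη4 : ‖η‖ ≤ ‖ξ‖ / 4 :=
    calc ‖η‖ ≤ (2 : ℝ) ^ (-10 : ℤ) * ‖ξ‖ := hηξ
      _ ≤ 1 / 4 * ‖ξ‖ := by gcongr; norm_num
      _ = ‖ξ‖ / 4 := by ring
  have hZX := sq_norm_le_two_mul_sq_norm_sub hη4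
  have hZ : 0 < ‖ξ - η‖ ^ 2 := by nlinarith
  have hξη : ξ ≠ η := fun h => by simp [h] at hZ
  rw [euler_Phi 1 ν (norm_pos_iff.1 (by linarith)) (norm_pos_iff.1 hη) hξη, ctilde,
    deriv_lam hZ, deriv_deriv_lam hZ, Phi_eq, one_mul, one_mul]
  exact abs_euler_phase_sub_le (fun _ => hasDerivAt_lam) (fun _ => hasDerivAt_lam₁)
    (fun _ => hasDerivAt_lam₂) (fun u hu => (abs_lam_le hu).trans (by linarith))
    (fun _ => lam₁_pos) (fun u hu => (lam₁_le hu).trans (by norm_num))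
    (fun u hu => (abs_mul_lam₂_le hu).trans (by nlinarith [lam₁_pos hu]))
    (fun _ => abs_mul_lam₂₃_le)
    (by rcases hν with rfl | rfl <;> norm_num) (by positivity)
    (pow_le_pow_left₀ hη.le (by linarith) 2) hZX (sq_sq_norm_sub_sq_norm_sub_le (by linarith))

end
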